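/- arXiv:2603.23228 — 4 statements merged into one kernel-verified Lean document; each statement's English description precedes it below -/
import Mathlib

section
/- For every n ≥ 1 and every partition λ of n, dim_loc(λ*) = dim_loc(λ), where λ* is the conjugate partition of λ. -/
/-!  Common definitions: the partition graph `Gₙ`, local simplex dimension,
simplex layers, corners, transfers, capacities, and phase boundaries. -/

/-- Vertices of the partition graph: partitions of `n`, encoded as
Young diagrams with `n` cells. -/
abbrev PartitionVertex (n : ℕ) := {μ : YoungDiagram // μ.card = n}

/-- The partition graph `Gₙ`: two distinct partitions of `n` are adjacent iff the
Young diagram of one is obtained from the other by removing one cell and adding one cell. -/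
def partitionGraph (n : ℕ) : SimpleGraph (PartitionVertex n) where
  Adj μ ν := μ ≠ ν ∧ (μ.1.cells \ ν.1.cells).card = 1 ∧ (ν.1.cells \ μ.1.cells).card = 1
  symm := ⟨fun _ _ ⟨h, h1, h2⟩ => ⟨h.symm, h2, h1⟩⟩
  loopless := ⟨fun _ ⟨h, _⟩ => h rfl⟩

/-- `dimLoc n lam` : the largest `d` such that some clique of `Gₙ` of cardinality `d+1`
contains `lam`. -/
noncomputable def dimLoc (n : ℕ) (lam : PartitionVertex n) : ℕ :=
  sSup {d : ℕ | ∃ s : Finset (PartitionVertex n),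
    (partitionGraph n).IsClique (↑s : Set (PartitionVertex n)) ∧ s.card = d + 1 ∧ lam ∈ s}

/-- The simplex layer `L_r(n)`. -/
def layer (n r : ℕ) : Set (PartitionVertex n) := {lam | dimLoc n lam = r}

/-- The upper simplex layer `L_{≥ r}(n)`. -/
def layerGe (n r : ℕ) : Set (PartitionVertex n) := {lam | r ≤ dimLoc n lam}

/-- `Δ(n)` : the maximal local simplex dimension over all partitions of `n`. -/
noncomputable def Delta (n : ℕ) : ℕ := ⨆ lam : PartitionVertex n, dimLoc n lam

/-- The conjugate (transpose) of a partition of `n`, as a vertex of `Gₙ`. -/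
def conjVertex (n : ℕ) (lam : PartitionVertex n) : PartitionVertex n :=
  ⟨lam.1.transpose, by
    simpa [YoungDiagram.transpose, YoungDiagram.card] using lam.2⟩

/-!
Transposing Young diagrams is an involution that carries the cells of `μ` missing from `ν`
bijectively onto the cells of `μ*` missing from `ν*`, so it is an automorphism of `Gₙ`.
Automorphisms map cliques to cliques of the same size, hence preserve `dim_loc`.
-/

theorem YoungDiagram.card_cells_transpose_sdiff (μ ν : YoungDiagram) :
    (μ.transpose.cells \ ν.transpose.cells).card = (μ.cells \ ν.cells).card := by
  have h : μ.transpose.cells \ ν.transpose.cells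
      = (μ.cells \ ν.cells).map (Equiv.prodComm ℕ ℕ).toEmbedding := by
    ext c
    simp only [Finset.mem_sdiff, Finset.mem_map_equiv, YoungDiagram.mem_cells,
      YoungDiagram.mem_transpose]
    rfl
  rw [h, Finset.card_map]

theorem SimpleGraph.IsClique.finsetMap_of_embedding {α β : Type*} {G : SimpleGraph α}
    {H : SimpleGraph β} {s : Finset α} (hs : G.IsClique (s : Set α)) (φ : G ↪g H) :
    H.IsClique (s.map φ.toEmbedding : Set β) := by
  rw [Finset.coe_map]
  rintro _ ⟨a, ha, rfl⟩ _ ⟨b, hb, rfl⟩ hab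
  exact φ.map_adj_iff.2 (hs ha hb (ne_of_apply_ne _ hab))

theorem dimLoc_apply_iso {n : ℕ} (φ : partitionGraph n ≃g partitionGraph n)
    (lam : PartitionVertex n) : dimLoc n (φ lam) = dimLoc n lam := by
  suffices transfer :
      ∀ (ψ : partitionGraph n ≃g partitionGraph n) (μ : PartitionVertex n) (d : ℕ),
      (∃ s : Finset (PartitionVertex n),
        (partitionGraph n).IsClique (s : Set (PartitionVertex n)) ∧ s.card = d + 1 ∧ μ ∈ s) →
      ∃ s : Finset (PartitionVertex n),
        (partitionGraph n).IsClique (s : Set (PartitionVertex n)) ∧ s.card = d + 1 ∧ ψ μ ∈ s by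
    unfold dimLoc
    congr 1
    ext d
    exact ⟨fun h => by simpa using transfer φ.symm (φ lam) d h, transfer φ lam d⟩
  rintro ψ μ d ⟨s, hs, hcard, hmem⟩
  exact ⟨s.map ψ.toEmbedding.toEmbedding, hs.finsetMap_of_embedding ψ.toEmbedding,
    by rw [Finset.card_map, hcard], Finset.mem_map_of_mem _ hmem⟩

theorem conjVertex_involutive (n : ℕ) : Function.Involutive (conjVertex n) := fun lam => by
  simp [conjVertex, YoungDiagram.transpose_transpose]

def conjIso (n : ℕ) : partitionGraph n ≃g partitionGraph n where
  toEquiv := (conjVertex_involutive n).toPerm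
  map_rel_iff' {μ ν} := by
    change (partitionGraph n).Adj (conjVertex n μ) (conjVertex n ν) ↔ _
    simp only [partitionGraph, conjVertex, ne_eq,
      YoungDiagram.transpose_eq_iff, YoungDiagram.card_cells_transpose_sdiff, Subtype.ext_iff]

theorem dimLoc_conj_general (n : ℕ) (lam : PartitionVertex n) :
    dimLoc n (conjVertex n lam) = dimLoc n lam :=
  dimLoc_apply_iso (conjIso n) lam

/-- For every `n ≥ 1` and every partition `λ` of `n`,
`dim_loc(λ*) = dim_loc(λ)`. -/
theorem dimLoc_conj (n : ℕ) (hn : 1 ≤ n) (lam : PartitionVertex n) :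
    dimLoc n (conjVertex n lam) = dimLoc n lam :=
  dimLoc_conj_general n lam
end

section
/- Let λ be a partition of n with n ≥ 2 and let c be a removable corner of the Young diagram of λ. Then the full star-simplex Σ^star_max(λ,c) = {λ} ∪ {λ(c→a) : a ∈ A_max(λ,c)} is a clique of the partition graph G_n; in particular, for any two distinct addable corners a, a' ∈ A_max(λ,c), the partitions λ(c→a) and λ(c→a') are adjacent in G_n. -/
/-- `c` is a removable corner of the Young diagram `μ`. -/
def Removable (μ : YoungDiagram) (c : ℕ × ℕ) : Prop :=
  c ∈ μ.cells ∧ IsLowerSet (↑(μ.cells.erase c) : Set (ℕ × ℕ))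

/-- `a` is an addable corner of the Young diagram `μ`. -/
def Addable (μ : YoungDiagram) (a : ℕ × ℕ) : Prop :=
  a ∉ μ.cells ∧ IsLowerSet (↑(insert a μ.cells) : Set (ℕ × ℕ))

/-- The cells of `λ(c→a)`: remove the cell `c` and add the cell `a`. -/
def transferCells (μ : YoungDiagram) (c a : ℕ × ℕ) : Finset (ℕ × ℕ) :=
  insert a (μ.cells.erase c)

/-- The transfer `λ(c→a)` is admissible: the result is again a Young diagram
and is different from `λ`. -/
def Admissible (μ : YoungDiagram) (c a : ℕ × ℕ) : Prop :=
  IsLowerSet (↑(transferCells μ c a) : Set (ℕ × ℕ)) ∧ transferCells μ c a ≠ μ.cells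

/-- `A_max(λ,c)`: the addable corners `a` for which `λ(c→a)` is admissible. -/
def Amax (μ : YoungDiagram) (c : ℕ × ℕ) : Set (ℕ × ℕ) :=
  {a | Addable μ a ∧ Admissible μ c a}

/-- `C_max(λ,a)`: the removable corners `c` for which `λ(c→a)` is admissible. -/
def Cmax (μ : YoungDiagram) (a : ℕ × ℕ) : Set (ℕ × ℕ) :=
  {c | Removable μ c ∧ Admissible μ c a}

/-- The full star-simplex `Σ^star_max(λ,c) = {λ} ∪ {λ(c→a) : a ∈ A_max(λ,c)}`,
as a set of vertices of `Gₙ`. -/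
def starSimplex (n : ℕ) (lam : PartitionVertex n) (c : ℕ × ℕ) : Set (PartitionVertex n) :=
  {ν | ν = lam ∨ ∃ a ∈ Amax lam.1 c, ν.1.cells = transferCells lam.1 c a}

/-- The full top-simplex `Σ^top_max(λ,a) = {λ} ∪ {λ(c→a) : c ∈ C_max(λ,a)}`,
as a set of vertices of `Gₙ`. -/
def topSimplex (n : ℕ) (lam : PartitionVertex n) (a : ℕ × ℕ) : Set (PartitionVertex n) :=
  {ν | ν = lam ∨ ∃ c ∈ Cmax lam.1 a, ν.1.cells = transferCells lam.1 c a}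

/-!
Any two members of the star-simplex are obtained from the common diagram `λ \ {c}` by adding
one cell outside `λ \ {c}` (`c` itself for `λ`, an addable corner `a ∉ λ` for `λ(c→a)`). Two
such diagrams differ by exactly one cell on each side, which is adjacency in `Gₙ`.
-/

section TransferCells

variable {μ : YoungDiagram} {c a a' : ℕ × ℕ}

theorem transferCells_sdiff_cells (ha : a ∉ μ.cells) : transferCells μ c a \ μ.cells = {a} := by
  rw [transferCells, Finset.insert_sdiff_of_notMem _ ha, Finset.erase_sdiff_comm,
    Finset.sdiff_self, Finset.erase_empty, Finset.insert_empty]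

theorem cells_sdiff_transferCells (hc : c ∈ μ.cells) (ha : a ∉ μ.cells) :
    μ.cells \ transferCells μ c a = {c} := by
  rw [transferCells, Finset.sdiff_insert_of_notMem ha, Finset.sdiff_erase_self hc]

theorem transferCells_sdiff_transferCells (ha : a ∉ μ.cells) (hne : a ≠ a') :
    transferCells μ c a \ transferCells μ c a' = {a} :=
  Finset.insert_sdiff_insert' hne fun h => ha (Finset.mem_of_mem_erase h)

end TransferCells

section PartitionGraph

variable {n : ℕ} {lam ν ν' : PartitionVertex n} {c a a' : ℕ × ℕ}

theorem partitionGraph_adj_of_sdiff_eq_singleton {x y : ℕ × ℕ}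
    (hx : ν.1.cells \ ν'.1.cells = {x}) (hy : ν'.1.cells \ ν.1.cells = {y}) :
    (partitionGraph n).Adj ν ν' := by
  refine ⟨?_, by simp [hx], by simp [hy]⟩
  rintro rfl
  simp at hx

theorem partitionGraph_adj_transfer_self (hc : c ∈ lam.1.cells) (ha : a ∉ lam.1.cells)
    (hν : ν.1.cells = transferCells lam.1 c a) : (partitionGraph n).Adj ν lam :=
  partitionGraph_adj_of_sdiff_eq_singleton (hν ▸ transferCells_sdiff_cells ha)
    (hν ▸ cells_sdiff_transferCells hc ha)

theorem partitionGraph_adj_transfer_transfer (ha : a ∉ lam.1.cells) (ha' : a' ∉ lam.1.cells)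
    (hne : a ≠ a') (hν : ν.1.cells = transferCells lam.1 c a)
    (hν' : ν'.1.cells = transferCells lam.1 c a') : (partitionGraph n).Adj ν ν' :=
  partitionGraph_adj_of_sdiff_eq_singleton (hν ▸ hν' ▸ transferCells_sdiff_transferCells ha hne)
    (hν ▸ hν' ▸ transferCells_sdiff_transferCells ha' hne.symm)

end PartitionGraph

theorem starSimplex_isClique_general (n : ℕ) (lam : PartitionVertex n) (c : ℕ × ℕ)
    (hc : Removable lam.1 c) :
    (partitionGraph n).IsClique (starSimplex n lam c) ∧
    ∀ a a' : ℕ × ℕ, a ∈ Amax lam.1 c → a' ∈ Amax lam.1 c → a ≠ a' →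
      ∀ ν ν' : PartitionVertex n, ν.1.cells = transferCells lam.1 c a →
        ν'.1.cells = transferCells lam.1 c a' → (partitionGraph n).Adj ν ν' := by
  have adj_transfers : ∀ a a' : ℕ × ℕ, a ∈ Amax lam.1 c → a' ∈ Amax lam.1 c → a ≠ a' →
      ∀ ν ν' : PartitionVertex n, ν.1.cells = transferCells lam.1 c a →
        ν'.1.cells = transferCells lam.1 c a' → (partitionGraph n).Adj ν ν' :=
    fun _ _ ha ha' hne _ _ hν hν' => partitionGraph_adj_transfer_transfer ha.1.1 ha'.1.1 hne hν hν'
  refine ⟨?_, adj_transfers⟩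
  rintro ν (rfl | ⟨a, ha, hν⟩) ν' (rfl | ⟨a', ha', hν'⟩) hνν'
  · exact absurd rfl hνν'
  · exact (partitionGraph_adj_transfer_self hc.1 ha'.1.1 hν').symm
  · exact partitionGraph_adj_transfer_self hc.1 ha.1.1 hν
  · obtain rfl | hne := eq_or_ne a a'
    · exact absurd (Subtype.ext (YoungDiagram.ext (hν.trans hν'.symm))) hνν'
    · exact adj_transfers a a' ha ha' hne ν ν' hν hν'

/-- For `n ≥ 2` and a removable corner `c` of `λ ⊢ n`, the full star-simplex
`Σ^star_max(λ,c)` is a clique of `Gₙ`; in particular, for distinct `a, a' ∈ A_max(λ,c)` the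
partitions `λ(c→a)` and `λ(c→a')` are adjacent in `Gₙ`. -/
theorem starSimplex_isClique (n : ℕ) (hn : 2 ≤ n) (lam : PartitionVertex n) (c : ℕ × ℕ)
    (hc : Removable lam.1 c) :
    (partitionGraph n).IsClique (starSimplex n lam c) ∧
    ∀ a a' : ℕ × ℕ, a ∈ Amax lam.1 c → a' ∈ Amax lam.1 c → a ≠ a' →
      ∀ ν ν' : PartitionVertex n, ν.1.cells = transferCells lam.1 c a →
        ν'.1.cells = transferCells lam.1 c a' → (partitionGraph n).Adj ν ν' :=
  starSimplex_isClique_general n lam c hc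
end

section
/- Let λ be a partition of n with n ≥ 2 and let a be an addable corner of the Young diagram of λ. Then the full top-simplex Σ^top_max(λ,a) = {λ} ∪ {λ(c→a) : c ∈ C_max(λ,a)} is a clique of the partition graph G_n; in particular, for any two distinct removable corners c, c' ∈ C_max(λ,a), the partitions λ(c→a) and λ(c'→a) are adjacent in G_n. -/
namespace Finset

variable {α : Type*} [DecidableEq α] {s : Finset α} {a c c' : α}

lemma insert_erase_sdiff_self (ha : a ∉ s) : insert a (s.erase c) \ s = {a} := by
  ext x
  simp only [mem_sdiff, mem_insert, mem_erase, mem_singleton]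
  constructor
  · rintro ⟨rfl | ⟨-, hx⟩, hxs⟩
    · rfl
    · exact absurd hx hxs
  · rintro rfl
    exact ⟨Or.inl rfl, ha⟩

lemma sdiff_insert_erase_self (hc : c ∈ s) (hca : c ≠ a) : s \ insert a (s.erase c) = {c} := by
  ext x
  simp only [mem_sdiff, mem_insert, mem_erase, mem_singleton]
  constructor
  · rintro ⟨hx, hxt⟩
    by_contra hxc
    exact hxt (Or.inr ⟨hxc, hx⟩)
  · rintro rfl
    exact ⟨hc, by rintro (h | ⟨h, -⟩) <;> contradiction⟩

lemma insert_erase_sdiff_insert_erase (hc' : c' ∈ s) (hcc' : c ≠ c') (hc'a : c' ≠ a) :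
    insert a (s.erase c) \ insert a (s.erase c') = {c'} := by
  ext x
  simp only [mem_sdiff, mem_insert, mem_erase, mem_singleton]
  constructor
  · rintro ⟨rfl | ⟨-, hx⟩, hxt⟩
    · exact absurd (Or.inl rfl) hxt
    · by_contra hxc'
      exact hxt (Or.inr ⟨hxc', hx⟩)
  · rintro rfl
    exact ⟨Or.inr ⟨hcc'.symm, hc'⟩, by rintro (h | ⟨h, -⟩) <;> contradiction⟩

end Finset

namespace partitionGraph

variable {n : ℕ} {lam ν ν' : PartitionVertex n} {a c c' : ℕ × ℕ}

lemma adj_of_sdiff_eq_singleton {x y : ℕ × ℕ} (hxy : ν.1.cells \ ν'.1.cells = {x})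
    (hyx : ν'.1.cells \ ν.1.cells = {y}) : (partitionGraph n).Adj ν ν' := by
  refine ⟨?_, by rw [hxy, Finset.card_singleton], by rw [hyx, Finset.card_singleton]⟩
  rintro rfl
  simp at hxy

lemma adj_transfer (ha : a ∉ lam.1.cells) (hc : c ∈ lam.1.cells)
    (hν : ν.1.cells = transferCells lam.1 c a) : (partitionGraph n).Adj lam ν := by
  have hca : c ≠ a := by rintro rfl; exact ha hc
  rw [transferCells] at hν
  exact adj_of_sdiff_eq_singleton (hν ▸ Finset.sdiff_insert_erase_self hc hca)
    (hν ▸ Finset.insert_erase_sdiff_self ha)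

lemma transfer_adj_transfer (ha : a ∉ lam.1.cells) (hc : c ∈ lam.1.cells)
    (hc' : c' ∈ lam.1.cells) (hcc' : c ≠ c') (hν : ν.1.cells = transferCells lam.1 c a)
    (hν' : ν'.1.cells = transferCells lam.1 c' a) : (partitionGraph n).Adj ν ν' := by
  have hca : c ≠ a := by rintro rfl; exact ha hc
  have hc'a : c' ≠ a := by rintro rfl; exact ha hc'
  rw [transferCells] at hν hν'
  exact adj_of_sdiff_eq_singleton
    (hν ▸ hν' ▸ Finset.insert_erase_sdiff_insert_erase hc' hcc' hc'a)
    (hν ▸ hν' ▸ Finset.insert_erase_sdiff_insert_erase hc hcc'.symm hca)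

end partitionGraph

theorem topSimplex_isClique_general (n : ℕ) (lam : PartitionVertex n) (a : ℕ × ℕ)
    (ha : Addable lam.1 a) :
    (partitionGraph n).IsClique (topSimplex n lam a) ∧
    ∀ c c' : ℕ × ℕ, c ∈ Cmax lam.1 a → c' ∈ Cmax lam.1 a → c ≠ c' →
      ∀ ν ν' : PartitionVertex n, ν.1.cells = transferCells lam.1 c a →
        ν'.1.cells = transferCells lam.1 c' a → (partitionGraph n).Adj ν ν' := by
  refine ⟨?_, fun c c' hc hc' hcc' _ _ ↦
    partitionGraph.transfer_adj_transfer ha.1 hc.1.1 hc'.1.1 hcc'⟩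
  change (partitionGraph n).IsClique
    (insert lam {ν | ∃ c ∈ Cmax lam.1 a, ν.1.cells = transferCells lam.1 c a})
  refine SimpleGraph.isClique_insert.2 ⟨?_, ?_⟩
  · rintro ν ⟨c, hc, hν⟩ ν' ⟨c', hc', hν'⟩ hne
    have hcc' : c ≠ c' := by
      rintro rfl
      exact hne (Subtype.ext (YoungDiagram.ext (hν.trans hν'.symm)))
    exact partitionGraph.transfer_adj_transfer ha.1 hc.1.1 hc'.1.1 hcc' hν hν'
  · rintro ν ⟨c, hc, hν⟩ -
    exact partitionGraph.adj_transfer ha.1 hc.1.1 hν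

/-- For `n ≥ 2` and an addable corner `a` of `λ ⊢ n`, the full top-simplex
`Σ^top_max(λ,a)` is a clique of `Gₙ`; in particular, for distinct `c, c' ∈ C_max(λ,a)` the
partitions `λ(c→a)` and `λ(c'→a)` are adjacent in `Gₙ`. -/
theorem topSimplex_isClique (n : ℕ) (hn : 2 ≤ n) (lam : PartitionVertex n) (a : ℕ × ℕ)
    (ha : Addable lam.1 a) :
    (partitionGraph n).IsClique (topSimplex n lam a) ∧
    ∀ c c' : ℕ × ℕ, c ∈ Cmax lam.1 a → c' ∈ Cmax lam.1 a → c ≠ c' →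
      ∀ ν ν' : PartitionVertex n, ν.1.cells = transferCells lam.1 c a →
        ν'.1.cells = transferCells lam.1 c' a → (partitionGraph n).Adj ν ν' :=
  topSimplex_isClique_general n lam a ha
end

section
/- Let λ be a partition of n with n ≥ 2 and let σ be any clique of the partition graph G_n containing λ. Then σ is contained in a full star-simplex through λ or in a full top-simplex through λ; that is, there exists a removable corner c of λ with σ ⊆ Σ^star_max(λ,c), or there exists an addable corner a of λ with σ ⊆ Σ^top_max(λ,a). -/
/-! A neighbour `ν` of `λ` in `Gₙ` is `λ(c→a)` for the single cell `c` of `λ \ ν` and the single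
cell `a` of `ν \ λ`. If two neighbours of `λ` are adjacent to each other, they share the removed
cell or the added cell: otherwise the added cell of the first and the removed cell of the second
would both lie in the one-cell difference of the two neighbours. A family of pairs that pairwise
agree in some coordinate all agree in the same coordinate, so the neighbours of `λ` in `σ` all
share one removed cell `c` (and `σ` lies in the star-simplex of `c`) or all share one added
cell `a` (and `σ` lies in the top-simplex of `a`). -/

theorem Set.Pairwise.forall_eq_or_forall_eq {ι α β : Type*} {s : Set ι} {f : ι → α} {g : ι → β}
    (h : s.Pairwise fun i j => f i = f j ∨ g i = g j) {i₀ : ι} (hi₀ : i₀ ∈ s) :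
    (∀ i ∈ s, f i = f i₀) ∨ (∀ i ∈ s, g i = g i₀) := by
  refine or_iff_not_imp_left.2 fun hf => ?_
  push Not at hf
  obtain ⟨j, hj, hfj⟩ := hf
  have hgj : g j = g i₀ := (h hj hi₀ (ne_of_apply_ne f hfj)).resolve_left hfj
  intro i hi
  by_cases hfi : f i = f i₀
  · have hfij : f i ≠ f j := hfi ▸ hfj.symm
    exact ((h hi hj (ne_of_apply_ne f hfij)).resolve_left hfij).trans hgj
  · exact (h hi hi₀ (ne_of_apply_ne f hfi)).resolve_left hfi

open Finset in
theorem Finset.sdiff_eq_or_sdiff_eq_of_card_sdiff_le_one {α : Type*} [DecidableEq α]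
    {s t₁ t₂ : Finset α} (h₁ : #(s \ t₁) = 1) (h₁' : #(t₁ \ s) = 1) (h₂ : #(s \ t₂) = 1)
    (h₂' : #(t₂ \ s) = 1) (h : #(t₁ \ t₂) ≤ 1) : s \ t₁ = s \ t₂ ∨ t₁ \ s = t₂ \ s := by
  obtain ⟨c₁, hc₁⟩ := card_eq_one.1 h₁
  obtain ⟨a₁, ha₁⟩ := card_eq_one.1 h₁'
  obtain ⟨c₂, hc₂⟩ := card_eq_one.1 h₂
  obtain ⟨a₂, ha₂⟩ := card_eq_one.1 h₂'
  rw [hc₁, ha₁, hc₂, ha₂, singleton_inj, singleton_inj]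
  by_contra! hne
  have hc₁' := Finset.ext_iff.1 hc₁ c₂
  have ha₁' := Finset.ext_iff.1 ha₁ a₁
  have hc₂' := Finset.ext_iff.1 hc₂ c₂
  have ha₂' := Finset.ext_iff.1 ha₂ a₁
  simp only [mem_sdiff, mem_singleton] at hc₁' ha₁' hc₂' ha₂'
  exact (one_lt_card.2 ⟨a₁, by grind, c₂, by grind, by grind⟩).not_ge h

namespace YoungDiagram

variable {μ ν : YoungDiagram} {c a : ℕ × ℕ}

theorem exists_addable (μ : YoungDiagram) : ∃ a, Addable μ a := by
  refine ⟨(μ.colLen 0, 0), fun h => (mem_iff_lt_colLen.1 h).false, ?_⟩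
  rintro y ⟨i, j⟩ hxy hy
  simp only [Finset.coe_insert, Set.mem_insert_iff, Finset.mem_coe, mem_cells] at hy ⊢
  rcases hy with rfl | hy
  · obtain ⟨hi, hj⟩ := Prod.mk_le_mk.1 hxy
    obtain rfl : j = 0 := Nat.le_zero.1 hj
    rcases hi.lt_or_eq with hi | rfl
    · exact Or.inr (mem_iff_lt_colLen.2 hi)
    · exact Or.inl rfl
  · exact Or.inr (μ.isLowerSet hxy hy)

theorem removable_of_sdiff_eq_singleton (h : μ.cells \ ν.cells = {c}) : Removable μ c := by
  have hc : c ∈ μ.cells := (Finset.mem_sdiff.1 (h ▸ Finset.mem_singleton_self c)).1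
  have herase : μ.cells.erase c = μ.cells ∩ ν.cells := by
    rw [Finset.erase_eq, ← h, Finset.sdiff_sdiff_self_left]
  refine ⟨hc, ?_⟩
  rw [herase, Finset.coe_inter]
  exact μ.isLowerSet.inter ν.isLowerSet

theorem addable_of_sdiff_eq_singleton (h : ν.cells \ μ.cells = {a}) : Addable μ a := by
  have ha : a ∉ μ.cells := (Finset.mem_sdiff.1 (h ▸ Finset.mem_singleton_self a)).2
  have hinsert : insert a μ.cells = μ.cells ∪ ν.cells := by
    rw [Finset.insert_eq, ← h, Finset.union_comm, Finset.union_sdiff_self_eq_union]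
  refine ⟨ha, ?_⟩
  rw [hinsert, Finset.coe_union]
  exact μ.isLowerSet.union ν.isLowerSet

theorem cells_eq_transferCells (hc : μ.cells \ ν.cells = {c}) (ha : ν.cells \ μ.cells = {a}) :
    ν.cells = transferCells μ c a := by
  rw [transferCells, Finset.insert_eq, Finset.erase_eq, ← hc, ← ha,
    Finset.sdiff_sdiff_self_left, Finset.inter_comm,
    Finset.sdiff_union_inter]

theorem admissible_of_sdiff_eq_singleton (hne : μ ≠ ν) (hc : μ.cells \ ν.cells = {c})
    (ha : ν.cells \ μ.cells = {a}) : Admissible μ c a := by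
  rw [Admissible, ← cells_eq_transferCells hc ha]
  exact ⟨ν.isLowerSet, fun h => hne (YoungDiagram.ext h.symm)⟩

end YoungDiagram

namespace partitionGraph

open YoungDiagram

variable {n : ℕ} {lam ν ν₁ ν₂ : PartitionVertex n} {c a : ℕ × ℕ}

theorem mem_starSimplex (hadj : (partitionGraph n).Adj lam ν)
    (hc : lam.1.cells \ ν.1.cells = {c}) : ν ∈ starSimplex n lam c := by
  obtain ⟨a, ha⟩ := Finset.card_eq_one.1 hadj.2.2
  exact Or.inr ⟨a, ⟨addable_of_sdiff_eq_singleton ha,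
    admissible_of_sdiff_eq_singleton (Subtype.coe_injective.ne hadj.1) hc ha⟩,
    cells_eq_transferCells hc ha⟩

theorem mem_topSimplex (hadj : (partitionGraph n).Adj lam ν)
    (ha : ν.1.cells \ lam.1.cells = {a}) : ν ∈ topSimplex n lam a := by
  obtain ⟨c, hc⟩ := Finset.card_eq_one.1 hadj.2.1
  exact Or.inr ⟨c, ⟨removable_of_sdiff_eq_singleton hc,
    admissible_of_sdiff_eq_singleton (Subtype.coe_injective.ne hadj.1) hc ha⟩,
    cells_eq_transferCells hc ha⟩

theorem sdiff_eq_or_sdiff_eq (h₁ : (partitionGraph n).Adj lam ν₁)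
    (h₂ : (partitionGraph n).Adj lam ν₂) (h : (partitionGraph n).Adj ν₁ ν₂) :
    lam.1.cells \ ν₁.1.cells = lam.1.cells \ ν₂.1.cells ∨
      ν₁.1.cells \ lam.1.cells = ν₂.1.cells \ lam.1.cells :=
  Finset.sdiff_eq_or_sdiff_eq_of_card_sdiff_le_one h₁.2.1 h₁.2.2 h₂.2.1 h₂.2.2 h.2.1.le

end partitionGraph

theorem clique_subset_star_or_top_general (n : ℕ) (lam : PartitionVertex n)
    (σ : Set (PartitionVertex n)) (hσ : (partitionGraph n).IsClique σ) (hlam : lam ∈ σ) :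
    (∃ c : ℕ × ℕ, Removable lam.1 c ∧ σ ⊆ starSimplex n lam c) ∨
    (∃ a : ℕ × ℕ, Addable lam.1 a ∧ σ ⊆ topSimplex n lam a) := by
  by_cases hσlam : σ ⊆ {lam}
  · obtain ⟨a, ha⟩ := lam.1.exists_addable
    exact Or.inr ⟨a, ha, fun ν hν => Or.inl (hσlam hν)⟩
  obtain ⟨ν₀, hν₀⟩ := Set.nonempty_of_not_subset hσlam
  have hadj : ∀ ν ∈ σ \ {lam}, (partitionGraph n).Adj lam ν :=
    fun ν hν => hσ hlam hν.1 (Ne.symm hν.2)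
  have hpair : (σ \ {lam}).Pairwise fun ν₁ ν₂ => lam.1.cells \ ν₁.1.cells =
      lam.1.cells \ ν₂.1.cells ∨ ν₁.1.cells \ lam.1.cells = ν₂.1.cells \ lam.1.cells :=
    fun ν₁ h₁ ν₂ h₂ hne => partitionGraph.sdiff_eq_or_sdiff_eq (hadj ν₁ h₁) (hadj ν₂ h₂)
      (hσ h₁.1 h₂.1 hne)
  have hmem : ∀ {S : Set (PartitionVertex n)}, lam ∈ S → (∀ ν ∈ σ \ {lam}, ν ∈ S) → σ ⊆ S :=
    fun hS h ν hν => (eq_or_ne ν lam).elim (· ▸ hS) fun hne => h ν ⟨hν, hne⟩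
  obtain ⟨c₀, hc₀⟩ := Finset.card_eq_one.1 (hadj ν₀ hν₀).2.1
  obtain ⟨a₀, ha₀⟩ := Finset.card_eq_one.1 (hadj ν₀ hν₀).2.2
  rcases hpair.forall_eq_or_forall_eq hν₀ with hc | ha
  · refine Or.inl ⟨c₀, YoungDiagram.removable_of_sdiff_eq_singleton hc₀, hmem (Or.inl rfl) ?_⟩
    exact fun ν hν => partitionGraph.mem_starSimplex (hadj ν hν) ((hc ν hν).trans hc₀)
  · refine Or.inr ⟨a₀, YoungDiagram.addable_of_sdiff_eq_singleton ha₀, hmem (Or.inl rfl) ?_⟩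
    exact fun ν hν => partitionGraph.mem_topSimplex (hadj ν hν) ((ha ν hν).trans ha₀)

/-- For `n ≥ 2`, every clique `σ` of `Gₙ` containing `λ` is contained in a
full star-simplex through `λ` or in a full top-simplex through `λ`. -/
theorem clique_subset_star_or_top (n : ℕ) (hn : 2 ≤ n) (lam : PartitionVertex n)
    (σ : Set (PartitionVertex n)) (hσ : (partitionGraph n).IsClique σ) (hlam : lam ∈ σ) :
    (∃ c : ℕ × ℕ, Removable lam.1 c ∧ σ ⊆ starSimplex n lam c) ∨
    (∃ a : ℕ × ℕ, Addable lam.1 a ∧ σ ⊆ topSimplex n lam a) :=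
  clique_subset_star_or_top_general n lam σ hσ hlam
end
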